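/- arXiv:0903.1925 — 15 statements merged into one kernel-verified Lean document; each statement's English description precedes it below -/
import Mathlib

section
/- Let R be a unital associative ℝ-algebra, let a, τ, q ∈ ℝ, and let w, v ∈ R satisfy the C_{L,a}-relations: w·w·v = a•w − q•(v·w·w) + τ•(w·v·w) and w·v·v = a•v − q•(v·v·w) + τ•(v·w·v). Then w·v and v·w commute: (w·v)·(v·w) = (v·w)·(w·v). -/
theorem commute_mul_mul_of_relations {K R : Type*} [CommSemiring K] [Ring R] [Algebra K R]
    (a τ q : K) (w v : R)
    (h1 : w * w * v = a • w - q • (v * w * w) + τ • (w * v * w))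
    (h2 : w * v * v = a • v - q • (v * v * w) + τ • (v * w * v)) :
    Commute (w * v) (v * w) :=
  calc (w * v) * (v * w)
      = (w * v * v) * w := by noncomm_ring
    _ = a • (v * w) - q • (v * v * w * w) + τ • (v * w * v * w) := by
        rw [h2]; simp only [sub_mul, add_mul, smul_mul_assoc]
    _ = v * (w * w * v) := by
        rw [h1]; simp only [mul_sub, mul_add, mul_smul_comm, mul_assoc]
    _ = (v * w) * (w * v) := by noncomm_ring

/-- For elements `w, v` of a unital associative ℝ-algebra satisfying the
`C_{L,a}`-relations, `w*v` and `v*w` commute. -/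
theorem stmt_0 (R : Type*) [Ring R] [Algebra ℝ R] (a τ q : ℝ) (w v : R)
    (h1 : w * w * v = a • w - q • (v * w * w) + τ • (w * v * w))
    (h2 : w * v * v = a • v - q • (v * v * w) + τ • (v * w * v)) :
    (w * v) * (v * w) = (v * w) * (w * v) :=
  commute_mul_mul_of_relations a τ q w v h1 h2
end

section
/- Let R be a unital associative ℝ-algebra, let α, β, γ, δ, u₀, v₀, a ∈ ℝ with a ≠ 0, set τ = α + δ and q = αδ − βγ, and let w, v ∈ R satisfy the C_{L,a}-relations with parameters a, τ, q. Define e = a⁻¹ • ( u₀ • (w·v) + (β·v₀ − δ·u₀) • (v·w) ) and ẽ = a⁻¹ • ( v₀ • (w·v) + (γ·u₀ − α·v₀) • (v·w) ). Then, with s := w and t := v, the defining relations of the algebra 𝒜_L hold: α•(e·s) + β•(ẽ·s) + u₀•s = s·e; γ•(e·s) + δ•(ẽ·s) + v₀•s = s·ẽ; α•(t·e) + β•(t·ẽ) + u₀•t = e·t; γ•(t·e) + δ•(t·ẽ) + v₀•t = ẽ·t; and e·ẽ = ẽ·e. -/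
set_option maxHeartbeats 1600000 in
/-- the map ψ from 𝒜_L to C_{L,a} respects the defining relations of 𝒜_L.
Here `e'` denotes ẽ (and `τ = α + δ`, `q = α δ − β γ` are substituted directly). -/
theorem stmt_1 (R : Type*) [Ring R] [Algebra ℝ R]
    (α β γ δ u₀ v₀ a : ℝ) (ha : a ≠ 0) (w v : R)
    (h1 : w * w * v = a • w - (α * δ - β * γ) • (v * w * w) + (α + δ) • (w * v * w))
    (h2 : w * v * v = a • v - (α * δ - β * γ) • (v * v * w) + (α + δ) • (v * w * v))
    (e e' s t : R)
    (he : e = a⁻¹ • (u₀ • (w * v) + (β * v₀ - δ * u₀) • (v * w)))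
    (he' : e' = a⁻¹ • (v₀ • (w * v) + (γ * u₀ - α * v₀) • (v * w)))
    (hs : s = w) (ht : t = v) :
    α • (e * s) + β • (e' * s) + u₀ • s = s * e ∧
    γ • (e * s) + δ • (e' * s) + v₀ • s = s * e' ∧
    α • (t * e) + β • (t * e') + u₀ • t = e * t ∧
    γ • (t * e) + δ • (t * e') + v₀ • t = e' * t ∧
    e * e' = e' * e := by
  subst hs ht he he'
  have hA : s * t * t * s = a • (t * s) - (α * δ - β * γ) • (t * t * s * s)
      + (α + δ) • (t * s * t * s) := by
    rw [show s * t * t * s = (s * t * t) * s from rfl, h2, add_mul, sub_mul,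
      smul_mul_assoc, smul_mul_assoc, smul_mul_assoc]
  have hB : t * s * s * t = a • (t * s) - (α * δ - β * γ) • (t * t * s * s)
      + (α + δ) • (t * s * t * s) := by
    rw [show t * s * s * t = t * (s * s * t) by noncomm_ring, h1, mul_add, mul_sub,
      mul_smul_comm, mul_smul_comm, mul_smul_comm]
    simp only [← mul_assoc]
  refine ⟨?_, ?_, ?_, ?_, ?_⟩
  · simp only [smul_add, smul_sub, smul_smul, mul_smul_comm, smul_mul_assoc, mul_add,
      add_mul, ← mul_assoc]
    rw [h1]
    simp only [smul_add, smul_sub, smul_smul]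
    match_scalars <;> field_simp <;> ring
  · simp only [smul_add, smul_sub, smul_smul, mul_smul_comm, smul_mul_assoc, mul_add,
      add_mul, ← mul_assoc]
    rw [h1]
    simp only [smul_add, smul_sub, smul_smul]
    match_scalars <;> field_simp <;> ring
  · simp only [smul_add, smul_sub, smul_smul, mul_smul_comm, smul_mul_assoc, mul_add,
      add_mul, ← mul_assoc]
    rw [h2]
    simp only [smul_add, smul_sub, smul_smul]
    match_scalars <;> field_simp <;> ring
  · simp only [smul_add, smul_sub, smul_smul, mul_smul_comm, smul_mul_assoc, mul_add,
      add_mul, ← mul_assoc]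
    rw [h2]
    simp only [smul_add, smul_sub, smul_smul]
    match_scalars <;> field_simp <;> ring
  · simp only [smul_add, smul_sub, smul_smul, mul_smul_comm, smul_mul_assoc, mul_add,
      add_mul, ← mul_assoc]
    simp only [hA, hB]
    simp only [smul_add, smul_sub, smul_smul]
    match_scalars <;> field_simp <;> ring
end

section
/- Let R be a unital associative ℝ-algebra, let α, β, γ, δ, u, v ∈ ℝ, and let s, t, e, ẽ ∈ R satisfy: s·e = α•(e·s) + β•(ẽ·s) + u•s; s·ẽ = γ•(e·s) + δ•(ẽ·s) + v•s; e·t = α•(t·e) + β•(t·ẽ) + u•t; ẽ·t = γ•(t·e) + δ•(t·ẽ) + v•t; and e·ẽ = ẽ·e. Define 𝕃 : R × R → R × R by 𝕃(x, y) = (α•x + β•y + u•1, γ•x + δ•y + v•1). Then for all natural numbers n, i, j, writing (Xₙ, Yₙ) = 𝕃^[n](e, ẽ), one has sⁿ · eⁱ · ẽʲ = Xₙⁱ · Yₙʲ · sⁿ and eⁱ · ẽʲ · tⁿ = tⁿ · Xₙⁱ · Yₙʲ. -/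
/-!
Write `a x = y a` as `SemiconjBy a x y`. In the ring `R × R`, the defining relations say that
`(s, s)` semiconjugates `(e, ẽ)` to `𝕃 (e, ẽ)`, and `(t, t)` semiconjugates `𝕃 (e, ẽ)` to
`(e, ẽ)`. Since `𝕃` is built from sums, scalar multiples and the unit, semiconjugation by
`(a, a)` is preserved by `𝕃`; iterating gives semiconjugation by `sⁿ` (resp. `tⁿ`) between
`(e, ẽ)` and `𝕃ⁿ (e, ẽ)`, which then passes to products of powers of the coordinates.
-/

def affinePair {K R : Type*} [CommSemiring K] [Semiring R] [Algebra K R]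
    (α β γ δ u v : K) (p : R × R) : R × R :=
  (α • p.1 + β • p.2 + u • (1 : R), γ • p.1 + δ • p.2 + v • (1 : R))

section Semiconj

variable {M : Type*} [Monoid M]

theorem SemiconjBy.iterate_of_map {f : M → M} {a : M}
    (hf : ∀ x y, SemiconjBy a x y → SemiconjBy a (f x) (f y)) {x y : M}
    (h : SemiconjBy a x y) (n : ℕ) : SemiconjBy a (f^[n] x) (f^[n] y) := by
  induction n generalizing x y with
  | zero => exact h
  | succ n ih => exact ih (hf x y h)

theorem SemiconjBy.pow_iterate {f : M → M} {a x : M}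
    (hf : ∀ x y, SemiconjBy a x y → SemiconjBy a (f x) (f y))
    (h : SemiconjBy a x (f x)) (n : ℕ) : SemiconjBy (a ^ n) x (f^[n] x) := by
  induction n with
  | zero => simp
  | succ n ih =>
    have step : SemiconjBy a (f^[n] x) (f^[n + 1] x) := by
      rw [Function.iterate_succ_apply]
      exact h.iterate_of_map hf n
    rw [pow_succ']
    exact step.mul_left ih

theorem SemiconjBy.pow_iterate_symm {f : M → M} {a x : M}
    (hf : ∀ x y, SemiconjBy a x y → SemiconjBy a (f x) (f y))
    (h : SemiconjBy a (f x) x) (n : ℕ) : SemiconjBy (a ^ n) (f^[n] x) x := by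
  induction n with
  | zero => simp
  | succ n ih =>
    have step : SemiconjBy a (f^[n + 1] x) (f^[n] x) := by
      rw [Function.iterate_succ_apply]
      exact h.iterate_of_map hf n
    rw [pow_succ]
    exact ih.mul_left step

end Semiconj

section AffinePair

variable {K R : Type*} [CommSemiring K] [Semiring R] [Algebra K R]

theorem SemiconjBy.affinePair {a : R} {p q : R × R} (h : SemiconjBy (a, a) p q)
    (α β γ δ u v : K) : SemiconjBy (a, a) (affinePair α β γ δ u v p) (affinePair α β γ δ u v q) := by
  obtain ⟨h₁, h₂⟩ := Prod.semiconjBy_iff.mp h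
  have hone : SemiconjBy a (1 : R) 1 := SemiconjBy.one_right a
  exact SemiconjBy.prod
    (((h₁.smul_right α).add_right (h₂.smul_right β)).add_right (hone.smul_right u))
    (((h₁.smul_right γ).add_right (h₂.smul_right δ)).add_right (hone.smul_right v))

theorem SemiconjBy.monomial {a x y x' y' : R} (hx : SemiconjBy a x x') (hy : SemiconjBy a y y')
    (i j : ℕ) : SemiconjBy a (x ^ i * y ^ j) (x' ^ i * y' ^ j) :=
  (hx.pow_right i).mul_right (hy.pow_right j)

end AffinePair

theorem stmt_2_general (R : Type*) [Ring R] [Algebra ℝ R]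
    (α β γ δ u v : ℝ) (s t e e' : R)
    (h1 : s * e = α • (e * s) + β • (e' * s) + u • s)
    (h2 : s * e' = γ • (e * s) + δ • (e' * s) + v • s)
    (h3 : e * t = α • (t * e) + β • (t * e') + u • t)
    (h4 : e' * t = γ • (t * e) + δ • (t * e') + v • t)
    (L : R × R → R × R)
    (hL : L = fun p => (α • p.1 + β • p.2 + u • (1 : R), γ • p.1 + δ • p.2 + v • (1 : R))) :
    ∀ n i j : ℕ,
      s ^ n * e ^ i * e' ^ j = (L^[n] (e, e')).1 ^ i * (L^[n] (e, e')).2 ^ j * s ^ n ∧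
      e ^ i * e' ^ j * t ^ n = t ^ n * ((L^[n] (e, e')).1 ^ i * (L^[n] (e, e')).2 ^ j) := by
  obtain rfl : L = affinePair α β γ δ u v := hL
  have hpres : ∀ (a : R) p q, SemiconjBy (a, a) p q →
      SemiconjBy (a, a) (affinePair α β γ δ u v p) (affinePair α β γ δ u v q) :=
    fun _ _ _ h ↦ h.affinePair α β γ δ u v
  have hs : SemiconjBy (s, s) (e, e') (affinePair α β γ δ u v (e, e')) :=
    SemiconjBy.prod (by simp [affinePair, SemiconjBy, h1, add_mul])
      (by simp [affinePair, SemiconjBy, h2, add_mul])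
  have ht : SemiconjBy (t, t) (affinePair α β γ δ u v (e, e')) (e, e') :=
    SemiconjBy.prod (by simp [affinePair, SemiconjBy, h3, mul_add])
      (by simp [affinePair, SemiconjBy, h4, mul_add])
  intro n i j
  obtain ⟨hs₁, hs₂⟩ := Prod.semiconjBy_iff.mp (hs.pow_iterate (hpres s) n)
  obtain ⟨ht₁, ht₂⟩ := Prod.semiconjBy_iff.mp (ht.pow_iterate_symm (hpres t) n)
  simp only [Prod.pow_fst, Prod.pow_snd] at hs₁ hs₂ ht₁ ht₂
  exact ⟨by rw [mul_assoc]; exact (hs₁.monomial hs₂ i j).eq, (ht₁.monomial ht₂ i j).eq.symm⟩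

/-- reordering formula in the algebra 𝒜_L for monomials `p(x,y) = xⁱ yʲ`:
`sⁿ eⁱ e'ʲ = Xₙⁱ Yₙʲ sⁿ` and `eⁱ e'ʲ tⁿ = tⁿ Xₙⁱ Yₙʲ` where `(Xₙ, Yₙ) = 𝕃^[n](e, e')`.
Here `e'` denotes ẽ. -/
theorem stmt_2 (R : Type*) [Ring R] [Algebra ℝ R]
    (α β γ δ u v : ℝ) (s t e e' : R)
    (h1 : s * e = α • (e * s) + β • (e' * s) + u • s)
    (h2 : s * e' = γ • (e * s) + δ • (e' * s) + v • s)
    (h3 : e * t = α • (t * e) + β • (t * e') + u • t)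
    (h4 : e' * t = γ • (t * e) + δ • (t * e') + v • t)
    (h5 : e * e' = e' * e)
    (L : R × R → R × R)
    (hL : L = fun p => (α • p.1 + β • p.2 + u • (1 : R), γ • p.1 + δ • p.2 + v • (1 : R))) :
    ∀ n i j : ℕ,
      s ^ n * e ^ i * e' ^ j = (L^[n] (e, e')).1 ^ i * (L^[n] (e, e')).2 ^ j * s ^ n ∧
      e ^ i * e' ^ j * t ^ n = t ^ n * ((L^[n] (e, e')).1 ^ i * (L^[n] (e, e')).2 ^ j) :=
  stmt_2_general R α β γ δ u v s t e e' h1 h2 h3 h4 L hL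
end

section
/- Let R be a unital associative ℝ-algebra, let a, τ ∈ ℝ, and let w, v ∈ R satisfy the C_{L,a}-relations with det A = 1, i.e. w²v = a•w − v w² + τ•(w v w) and w v² = a•v − v² w + τ•(v w v). Set d = w·v, d̃ = v·w and Ĉ = (−4a)•(d + d̃) + (2 − τ)•(d + d̃)² + (2 + τ)•(d − d̃)². Then Ĉ commutes with both w and v: Ĉ·w = w·Ĉ and Ĉ·v = v·Ĉ. -/
/-!
Both relations are instances of the single relation `x²y + yx² = a x + τ xyx`, the second one with
the roles of `w` and `v` exchanged, and `Ĉ` is symmetric under that exchange. So it suffices to see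
that `Ĉ` commutes with `x` under this one relation, and indeed `Ĉ x - x Ĉ` is a combination of
the relation multiplied on either side by `x y` and `y x`.
-/

section Casimir

variable {k R : Type*} [CommRing k] [Ring R] [Algebra k R]

def casimir (a τ : k) (w v : R) : R :=
  (-4 * a) • (w * v + v * w) + (2 - τ) • (w * v + v * w) ^ 2 + (2 + τ) • (w * v - v * w) ^ 2

theorem casimir_comm (a τ : k) (w v : R) : casimir a τ v w = casimir a τ w v := by
  simp only [casimir]
  noncomm_ring

theorem commute_casimir_left {a τ : k} {w v : R}
    (h : w * w * v + v * w * w = a • w + τ • (w * v * w)) :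
    Commute (casimir a τ w v) w := by
  unfold Commute SemiconjBy casimir
  linear_combination (norm := (noncomm_ring; match_scalars <;> ring))
    (-4 : k) • (h * (w * v)) + (2 * τ) • (h * (v * w))
      + (-2 * τ) • ((w * v) * h) + (4 : k) • ((v * w) * h)

end Casimir

/-- the Casimir element
`Ĉ = −4a(d+d') + (2−τ)(d+d')² + (2+τ)(d−d')²` (with `d = w v`, `d' = v w`)
commutes with `w` and `v` when the `C_{L,a}`-relations hold with `det A = 1`. -/
theorem stmt_4 (R : Type*) [Ring R] [Algebra ℝ R]
    (a τ : ℝ) (w v : R)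
    (h1 : w * w * v = a • w - v * w * w + τ • (w * v * w))
    (h2 : w * v * v = a • v - v * v * w + τ • (v * w * v))
    (d d' C : R) (hd : d = w * v) (hd' : d' = v * w)
    (hC : C = (-4 * a) • (d + d') + (2 - τ) • (d + d') ^ 2 + (2 + τ) • (d - d') ^ 2) :
    C * w = w * C ∧ C * v = v * C := by
  have hC : C = casimir a τ w v := by rw [hC, hd, hd', casimir]
  have hw : w * w * v + v * w * w = a • w + τ • (w * v * w) := by rw [h1]; abel
  have hv : v * v * w + w * v * v = a • v + τ • (v * w * v) := by rw [h2]; abel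
  rw [hC]
  exact ⟨commute_casimir_left hw, casimir_comm a τ w v ▸ commute_casimir_left hv⟩
end

section
/- Let R be a unital associative ℝ-algebra and let w, v ∈ R satisfy the C_{L,a}-relations with a = 0, tr A = 0 and det A = −1, i.e. w²v = v w² and w v² = v² w. Set d = w·v and d̃ = v·w. Then for all r, s, t ∈ ℝ the element Ĉ_{r,s,t} = r•(d + d̃) + s•(d + d̃)² + t•(d − d̃)² commutes with both w and v: Ĉ_{r,s,t}·w = w·Ĉ_{r,s,t} and Ĉ_{r,s,t}·v = v·Ĉ_{r,s,t}. -/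
/-!
Write `P = wv + vw` and `M = wv - vw`. Each relation says that a square (`w²` or `v²`) is central
for the pair, and this is exactly what makes `P` commute with `w` and `v` and `M` anticommute with
them. Hence `P`, `P²` and `M²` all commute with `w` and `v`, and so does every linear combination.
-/

section Ring

variable {R : Type*} [Ring R]

theorem commute_sq_of_mul_eq_neg_mul {a x : R} (h : a * x = -(x * a)) : Commute (a ^ 2) x := by
  calc a ^ 2 * x = a * (a * x) := by rw [sq, mul_assoc]
    _ = x * a ^ 2 := by rw [h, mul_neg, ← mul_assoc, h, neg_mul, neg_neg, mul_assoc, sq]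

variable {w v : R}

theorem commute_mul_add_mul_left (h : Commute (w * w) v) : Commute (w * v + v * w) w := by
  have h' : v * w * w = w * w * v := by rw [mul_assoc]; exact h.eq.symm
  simp only [Commute, SemiconjBy, add_mul, mul_add, h', ← mul_assoc, add_comm]

theorem commute_mul_add_mul_right (h : Commute w (v * v)) : Commute (w * v + v * w) v := by
  have h' : w * v * v = v * v * w := by rw [mul_assoc]; exact h.eq
  simp only [Commute, SemiconjBy, add_mul, mul_add, h', ← mul_assoc, add_comm]

theorem mul_sub_mul_mul_left (h : Commute (w * w) v) :
    (w * v - v * w) * w = -(w * (w * v - v * w)) := by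
  have h' : v * w * w = w * w * v := by rw [mul_assoc]; exact h.eq.symm
  simp only [sub_mul, mul_sub, h', ← mul_assoc, neg_sub]

theorem mul_sub_mul_mul_right (h : Commute w (v * v)) :
    (w * v - v * w) * v = -(v * (w * v - v * w)) := by
  have h' : w * v * v = v * v * w := by rw [mul_assoc]; exact h.eq
  simp only [sub_mul, mul_sub, h', ← mul_assoc, neg_sub]

theorem Commute.smul_add_smul_sq_add_smul_sq {S : Type*} [CommSemiring S] [Algebra S R]
    {P M x : R} (hP : Commute P x) (hM : Commute (M ^ 2) x) (r s t : S) :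
    Commute (r • P + s • P ^ 2 + t • M ^ 2) x :=
  ((hP.smul_left r).add_left ((hP.pow_left 2).smul_left s)).add_left (hM.smul_left t)

end Ring

/-- when `a = 0`, `tr A = 0`, `det A = −1` (so the `C_{L,a}`-relations read
`w²v = v w²` and `w v² = v² w`), the element
`Ĉ_{r,s,t} = r(d+d') + s(d+d')² + t(d−d')²` commutes with `w` and `v` for all `r, s, t`. -/
theorem stmt_5 (R : Type*) [Ring R] [Algebra ℝ R]
    (w v : R)
    (h1 : w * w * v = v * w * w)
    (h2 : w * v * v = v * v * w)
    (d d' : R) (hd : d = w * v) (hd' : d' = v * w) :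
    ∀ r s t : ℝ,
      (r • (d + d') + s • (d + d') ^ 2 + t • (d - d') ^ 2) * w =
        w * (r • (d + d') + s • (d + d') ^ 2 + t • (d - d') ^ 2) ∧
      (r • (d + d') + s • (d + d') ^ 2 + t • (d - d') ^ 2) * v =
        v * (r • (d + d') + s • (d + d') ^ 2 + t • (d - d') ^ 2) := by
  intro r s t
  subst hd hd'
  have hw : Commute (w * w) v := by rw [Commute, SemiconjBy, h1, mul_assoc]
  have hv : Commute w (v * v) := by rw [Commute, SemiconjBy, ← mul_assoc, h2, mul_assoc]
  exact ⟨Commute.smul_add_smul_sq_add_smul_sq (commute_mul_add_mul_left hw)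
      (commute_sq_of_mul_eq_neg_mul (mul_sub_mul_mul_left hw)) r s t,
    Commute.smul_add_smul_sq_add_smul_sq (commute_mul_add_mul_right hv)
      (commute_sq_of_mul_eq_neg_mul (mul_sub_mul_mul_right hv)) r s t⟩
end

section
/- Let a ∈ ℝ and define L̂ : ℝ² → ℝ² by L̂(x, y) = (2x − y + a, x) (the case det A = 1, tr A = 2). Then for every natural number n and all (x, y) ∈ ℝ², L̂^[n](x, y) = ( (1 + n)·x − n·y + a·n·(n + 1)/2, n·x + (1 − n)·y + a·n·(n − 1)/2 ). -/
/-!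
The linear part `(x, y) ↦ (2x − y, x)` is unipotent, and along an orbit the difference of the two
coordinates grows by `a` at each step. Hence the coordinates of the iterates are quadratic in `n`,
and the closed form is checked by induction on `n`.
-/

/-- The paper's `L̂` in the case `tr A = 2`, `det A = 1`. -/
def unipotentAffineMap {K : Type*} [Field K] (a : K) (p : K × K) : K × K :=
  (2 * p.1 - p.2 + a, p.1)

theorem unipotentAffineMap_iterate {K : Type*} [Field K] (h2 : (2 : K) ≠ 0) (a : K) (n : ℕ)
    (x y : K) :
    (unipotentAffineMap a)^[n] (x, y) =
      ((1 + n) * x - n * y + a * n * (n + 1) / 2, n * x + (1 - n) * y + a * n * (n - 1) / 2) := by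
  induction n generalizing x y with
  | zero => simp
  | succ n ih =>
    rw [Function.iterate_succ_apply, unipotentAffineMap, ih]
    push_cast
    refine Prod.ext ?_ ?_ <;> field_simp <;> ring

/-- explicit formula for the `n`-th iterate of the affine map
`L̂(x,y) = (2x − y + a, x)` (the case `det A = 1`, `tr A = 2`). -/
theorem stmt_7 (a : ℝ)
    (L : ℝ × ℝ → ℝ × ℝ) (hL : L = fun p => (2 * p.1 - p.2 + a, p.1)) :
    ∀ n : ℕ, ∀ x y : ℝ,
      L^[n] (x, y) =
        ((1 + (n : ℝ)) * x - (n : ℝ) * y + a * (n : ℝ) * ((n : ℝ) + 1) / 2,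
         (n : ℝ) * x + (1 - (n : ℝ)) * y + a * (n : ℝ) * ((n : ℝ) - 1) / 2) := by
  subst hL
  exact unipotentAffineMap_iterate two_ne_zero a
end

section
/- Let a ∈ ℝ, let τ ∈ ℝ with τ ≥ 2, and define L̂ : ℝ² → ℝ² by L̂(x, y) = (τx − y + a, x) (the case det A = 1, Δ = 2 − τ ≤ 0). Then L̂ has no periodic points other than fixed points: for every p ∈ ℝ² and every natural number n ≥ 1, if L̂^[n](p) = p then L̂(p) = p. -/
/-!
The first coordinates `x k` of an orbit satisfy `x (k+2) - τ x (k+1) + x k = a`. If the orbit is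
`n`-periodic, summing the recurrence gives `(2 - τ) S = n a` and summing it against `x (k+1)`
(summation by parts) gives `∑ (x (k+1) - x k)² = (2 - τ) T - a S`, where `S = ∑ x k` and
`T = ∑ x k²` over one period. Hence `n ∑ (x (k+1) - x k)² = (2 - τ)(n T - S²) ≤ 0` by
Cauchy–Schwarz, so the orbit is constant, i.e. a fixed point.
-/

open Finset Function

theorem Function.Periodic.sum_range_comp_add_one {M : Type*} [AddCancelCommMonoid M]
    {f : ℕ → M} {n : ℕ} (hf : Periodic f n) :
    ∑ i ∈ range n, f (i + 1) = ∑ i ∈ range n, f i := by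
  have h := (sum_range_succ' f n).symm.trans (sum_range_succ f n)
  rwa [← zero_add n, hf 0, zero_add, add_left_inj] at h

theorem Function.Periodic.sum_range_sq_sub {R : Type*} [CommRing R] {x : ℕ → R} {n : ℕ}
    (hx : Periodic x n) :
    ∑ i ∈ range n, (x (i + 1) - x i) ^ 2 =
      ∑ i ∈ range n, (2 * x (i + 1) - x (i + 2) - x i) * x (i + 1) := by
  have hg : Periodic (fun i => (x (i + 1) - x i) * x i) n := fun i => by
    simp only [add_right_comm i n 1, hx i, hx (i + 1)]
  have hshift := hg.sum_range_comp_add_one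
  calc ∑ i ∈ range n, (x (i + 1) - x i) ^ 2
      = ∑ i ∈ range n, (x (i + 1) - x i) * x (i + 1) -
          ∑ i ∈ range n, (x (i + 1) - x i) * x i := by
        rw [← sum_sub_distrib]; exact sum_congr rfl fun i _ => by ring
    _ = _ := by
        rw [← hshift, ← sum_sub_distrib]; exact sum_congr rfl fun i _ => by ring

theorem Function.Periodic.natCast_mul_sum_range_sq_sub {R : Type*} [CommRing R] {x : ℕ → R}
    {n : ℕ} {τ a : R} (hx : Periodic x n) (hrec : ∀ i, x (i + 2) + x i = τ * x (i + 1) + a) :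
    n * ∑ i ∈ range n, (x (i + 1) - x i) ^ 2 =
      (2 - τ) * (n * ∑ i ∈ range n, x i ^ 2 - (∑ i ∈ range n, x i) ^ 2) := by
  set S := ∑ i ∈ range n, x i
  set T := ∑ i ∈ range n, x i ^ 2
  have hS1 : ∑ i ∈ range n, x (i + 1) = S := hx.sum_range_comp_add_one
  have hS2 : ∑ i ∈ range n, x (i + 2) = S := (hx.add_const 1).sum_range_comp_add_one.trans hS1
  have hT1 : ∑ i ∈ range n, x (i + 1) ^ 2 = T := (hx.comp (· ^ 2)).sum_range_comp_add_one
  have hmean : (2 - τ) * S = n * a := by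
    have h := sum_congr rfl fun i (_ : i ∈ range n) => hrec i
    rw [sum_add_distrib, sum_add_distrib, ← mul_sum, sum_const, card_range, nsmul_eq_mul,
      hS1, hS2] at h
    linear_combination h
  have henergy : ∑ i ∈ range n, (x (i + 1) - x i) ^ 2 = (2 - τ) * T - a * S := by
    rw [hx.sum_range_sq_sub, ← hT1, ← hS1, mul_sum, mul_sum, ← sum_sub_distrib]
    exact sum_congr rfl fun i _ => by linear_combination (-x (i + 1)) * hrec i
  rw [henergy]
  linear_combination S * hmean

theorem Function.Periodic.apply_eq_apply_zero_of_add_eq_mul_add {K : Type*} [CommRing K]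
    [LinearOrder K] [IsStrictOrderedRing K] {x : ℕ → K} {n : ℕ} {τ a : K} (hx : Periodic x n)
    (hn : 0 < n) (hτ : 2 ≤ τ) (hrec : ∀ i, x (i + 2) + x i = τ * x (i + 1) + a) (i : ℕ) :
    x i = x 0 := by
  have hnonneg : ∀ i ∈ range n, 0 ≤ (x (i + 1) - x i) ^ 2 := fun i _ => sq_nonneg _
  have hle : (n : K) * ∑ i ∈ range n, (x (i + 1) - x i) ^ 2 ≤ 0 := by
    rw [hx.natCast_mul_sum_range_sq_sub hrec]
    exact mul_nonpos_of_nonpos_of_nonneg (by linarith)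
      (sub_nonneg.mpr (sq_sum_le_card_mul_sum_sq.trans_eq (by rw [card_range])))
  have hzero : ∑ i ∈ range n, (x (i + 1) - x i) ^ 2 = 0 :=
    le_antisymm (nonpos_of_mul_nonpos_right hle (by exact_mod_cast hn)) (sum_nonneg hnonneg)
  have hd : Periodic (fun i => x (i + 1) - x i) n := (hx.add_const 1).sub hx
  have hstep : ∀ i, x (i + 1) = x i := fun i => by
    rw [← sub_eq_zero, ← hd.map_mod_nat, ← pow_eq_zero_iff two_ne_zero]
    exact (sum_eq_zero_iff_of_nonneg hnonneg).mp hzero _ (mem_range.mpr (Nat.mod_lt i hn))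
  induction i with
  | zero => rfl
  | succ i ih => rw [hstep, ih]

theorem fst_iterate_add_two {R : Type*} [CommRing R] {τ a : R} {L : R × R → R × R}
    (hL : ∀ q, L q = (τ * q.1 - q.2 + a, q.1)) (p : R × R) (k : ℕ) :
    (L^[k + 2] p).1 + (L^[k] p).1 = τ * (L^[k + 1] p).1 + a := by
  simp only [iterate_succ_apply', hL]
  ring

theorem snd_iterate_succ {R : Type*} {f : R × R → R} {L : R × R → R × R}
    (hL : ∀ q, L q = (f q, q.1)) (p : R × R) (k : ℕ) : (L^[k + 1] p).2 = (L^[k] p).1 := by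
  rw [iterate_succ_apply', hL]

/-- for `det A = 1` and `tr A = τ ≥ 2`, the affine map
`L̂(x,y) = (τx − y + a, x)` has no periodic points other than fixed points. -/
theorem stmt_8 (a τ : ℝ) (hτ : 2 ≤ τ)
    (L : ℝ × ℝ → ℝ × ℝ) (hL : L = fun p => (τ * p.1 - p.2 + a, p.1)) :
    ∀ p : ℝ × ℝ, ∀ n : ℕ, 1 ≤ n → L^[n] p = p → L p = p := by
  intro p n hn hper
  have hL' : ∀ q, L q = (τ * q.1 - q.2 + a, q.1) := fun q => by rw [hL]
  obtain ⟨m, rfl⟩ : ∃ m, n = m + 1 := ⟨n - 1, by omega⟩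
  have hx : Periodic (fun k => (L^[k] p).1) (m + 1) := fun k => by
    simp only [iterate_add_apply, hper]
  have hconst :=
    hx.apply_eq_apply_zero_of_add_eq_mul_add m.succ_pos hτ (fst_iterate_add_two hL' p)
  refine Prod.ext (hconst 1) ?_
  calc (L p).2 = p.1 := by rw [hL']
    _ = (L^[m] p).1 := (hconst m).symm
    _ = (L^[m + 1] p).2 := (snd_iterate_succ hL' p m).symm
    _ = p.2 := by rw [hper]
end

section
/- Let a ∈ ℝ with a ≥ 0, let τ ∈ ℝ with τ > 2, and define L̂ : ℝ² → ℝ² by L̂(x, y) = (τx − y + a, x) (the case det A = 1, Δ = 2 − τ < 0). Then for every natural number n ≥ 1 there exist no real numbers x > 0 and y > 0 such that L̂^[n](x, 0) = (0, y). -/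
/-! For `τ ≥ 2` and `a ≥ 0` the open cone `0 < y < x` is forward invariant under
`L̂(x, y) = (τx − y + a, x)`: the new gap is `(τ − 2)x + (x − y) + a > 0`. A point `(x, 0)` with
`x > 0` lands in the cone after one step, so every later iterate stays there, while no point
`(0, y)` belongs to it. -/

def belowDiagonalCone : Set (ℝ × ℝ) := {p | 0 < p.2 ∧ p.2 < p.1}

theorem mapsTo_belowDiagonalCone {a τ : ℝ} (ha : 0 ≤ a) (hτ : 2 ≤ τ) :
    Set.MapsTo (fun p : ℝ × ℝ => (τ * p.1 - p.2 + a, p.1)) belowDiagonalCone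
      belowDiagonalCone := by
  rintro ⟨x, y⟩ ⟨hy, hyx⟩
  exact ⟨hy.trans hyx, by simp only; nlinarith⟩

theorem mem_belowDiagonalCone_of_axis {a τ x : ℝ} (ha : 0 ≤ a) (hτ : 1 < τ) (hx : 0 < x) :
    (τ * x - 0 + a, x) ∈ belowDiagonalCone :=
  ⟨hx, by nlinarith⟩

theorem mk_zero_notMem_belowDiagonalCone (y : ℝ) : (0, y) ∉ belowDiagonalCone :=
  fun ⟨hy, hy0⟩ => lt_asymm hy hy0

/-- for `det A = 1`, `tr A = τ > 2` and `a ≥ 0`, the affine map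
`L̂(x,y) = (τx − y + a, x)` has no strings: no iterate maps a point on the
positive x-axis to a point on the positive y-axis. -/
theorem stmt_9 (a τ : ℝ) (ha : 0 ≤ a) (hτ : 2 < τ)
    (L : ℝ × ℝ → ℝ × ℝ) (hL : L = fun p => (τ * p.1 - p.2 + a, p.1)) :
    ∀ n : ℕ, 1 ≤ n → ¬ ∃ x y : ℝ, 0 < x ∧ 0 < y ∧ L^[n] (x, 0) = (0, y) := by
  rintro n hn ⟨x, y, hx, -, hxy⟩
  subst hL
  obtain ⟨m, rfl⟩ := Nat.exists_eq_add_of_le' hn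
  have hcone := (mapsTo_belowDiagonalCone ha hτ.le).iterate m
    (mem_belowDiagonalCone_of_axis ha (one_lt_two.trans hτ) hx)
  rw [Function.iterate_succ_apply] at hxy
  exact mk_zero_notMem_belowDiagonalCone y (hxy ▸ hcone)
end

section
/- Let a ∈ ℝ with a ≥ 0 and define L̂ : ℝ² → ℝ² by L̂(x, y) = (2x − y + a, x) (the case det A = 1, tr A = 2, so Δ = 0). Then for every natural number n ≥ 1 there exist no real numbers x > 0 and y > 0 such that L̂^[n](x, 0) = (0, y). -/
/-! The linear part of `L̂` has eigenvalue `1` with left eigenvector `(1, -1)`, so `L̂` shifts the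
quantity `x - y` by exactly `a`. Along the orbit of `(x, 0)` it therefore equals `x + n a > 0`,
whereas at `(0, y)` it equals `-y < 0`. -/

theorem semiconj_fst_sub_snd {R : Type*} [CommRing R] (a : R) :
    Function.Semiconj (fun p : R × R => p.1 - p.2)
      (fun p => (2 * p.1 - p.2 + a, p.1)) (· + a) := by
  intro p
  ring

theorem iterate_fst_sub_snd {R : Type*} [CommRing R] (a : R) (n : ℕ) (p : R × R) :
    ((fun p : R × R => (2 * p.1 - p.2 + a, p.1))^[n] p).1 -
      ((fun p : R × R => (2 * p.1 - p.2 + a, p.1))^[n] p).2 = p.1 - p.2 + n • a := by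
  simpa only [add_right_iterate_apply] using (semiconj_fst_sub_snd a).iterate_right n p

/-- for `det A = 1`, `tr A = 2` and `a ≥ 0`, the affine map
`L̂(x,y) = (2x − y + a, x)` has no strings: no iterate maps a point on the
positive x-axis to a point on the positive y-axis. -/
theorem stmt_10 (a : ℝ) (ha : 0 ≤ a)
    (L : ℝ × ℝ → ℝ × ℝ) (hL : L = fun p => (2 * p.1 - p.2 + a, p.1)) :
    ∀ n : ℕ, 1 ≤ n → ¬ ∃ x y : ℝ, 0 < x ∧ 0 < y ∧ L^[n] (x, 0) = (0, y) := by
  subst hL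
  rintro n - ⟨x, y, hx, hy, hxy⟩
  have gap := iterate_fst_sub_snd a n (x, 0)
  rw [hxy, nsmul_eq_mul] at gap
  have : 0 ≤ (n : ℝ) * a := by positivity
  simp only at gap
  linarith
end

section
/- Let n ≥ 1 be a natural number, let a, τ ∈ ℝ with a ≥ 0 and τ ≥ 2, and let W be an n×n complex matrix such that, with V = Wᴴ (the conjugate transpose), the relations W·W·V = a•W − V·W·W + τ•(W·V·W) and W·V·V = a•V − V·V·W + τ•(V·W·V) hold (the C_{L,a}-relations with det A = 1). Assume the representation is irreducible: every subspace U of ℂⁿ with W·U ⊆ U and Wᴴ·U ⊆ U satisfies U = {0} or U = ℂⁿ. Then n = 1. -/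
/-!
Tracing the first relation against `Wᴴ`, once on the left and once on the right, gives
`2 tr(WᴴW·WWᴴ) = a tr(WᴴW) + τ tr((WᴴW)²) = a tr(WᴴW) + τ tr((WWᴴ)²)`.
Hence the self-adjoint commutator `C = WWᴴ - WᴴW` satisfies
`tr(CᴴC) = (2 - τ) tr((WᴴW)²) - a tr(WᴴW) ≤ 0`, so `C = 0` and `W` is normal.
By Schur's lemma `W` and `Wᴴ` then act by scalars, so every subspace is invariant and
irreducibility forces the space to be a line.
-/

open scoped Matrix ComplexOrder

namespace Module.End

variable {K V : Type*} [Field K] [IsAlgClosed K] [AddCommGroup V] [Module K V]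
  [FiniteDimensional K V] [Nontrivial V]

theorem exists_eq_smul_one_of_commute_of_irreducible {f g : End K V} (hfg : Commute f g)
    (hirr : ∀ U : Submodule K V, (∀ x ∈ U, f x ∈ U) → (∀ x ∈ U, g x ∈ U) → U = ⊥ ∨ U = ⊤) :
    ∃ μ : K, f = μ • 1 := by
  obtain ⟨μ, hμ⟩ := f.exists_eigenvalue
  refine ⟨μ, ?_⟩
  have hE : f.eigenspace μ = ⊤ :=
    (hirr _ (mapsTo_genEigenspace_of_comm (Commute.refl f) μ 1)
      (mapsTo_genEigenspace_of_comm hfg μ 1)).resolve_left hμ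
  ext1 x
  exact mem_eigenspace_iff.mp (hE ▸ Submodule.mem_top)

theorem finrank_eq_one_of_commute_of_irreducible {f g : End K V} (hfg : Commute f g)
    (hirr : ∀ U : Submodule K V, (∀ x ∈ U, f x ∈ U) → (∀ x ∈ U, g x ∈ U) → U = ⊥ ∨ U = ⊤) :
    Module.finrank K V = 1 := by
  obtain ⟨μ, rfl⟩ := exists_eq_smul_one_of_commute_of_irreducible hfg hirr
  obtain ⟨ν, rfl⟩ := exists_eq_smul_one_of_commute_of_irreducible hfg.symm
    fun U hg hf ↦ hirr U hf hg
  have : IsSimpleModule K V :=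
    { eq_bot_or_eq_top := fun U ↦
        hirr U (fun _ hx ↦ U.smul_mem μ hx) (fun _ hx ↦ U.smul_mem ν hx) }
  exact isSimpleModule_iff_finrank_eq_one.mp this

end Module.End

namespace Matrix

variable {𝕜 ι : Type*} [RCLike 𝕜] [Fintype ι] {W : Matrix ι ι 𝕜} {a τ : ℝ}

theorem two_mul_trace_eq_of_relation_left
    (h : W * W * Wᴴ = a • W - Wᴴ * W * W + τ • (W * Wᴴ * W)) :
    2 * trace (Wᴴ * W * (W * Wᴴ)) = a * trace (Wᴴ * W) + τ * trace (Wᴴ * W * (Wᴴ * W)) := by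
  have h' : Wᴴ * (W * W * Wᴴ + Wᴴ * W * W) = a • (Wᴴ * W) + τ • (Wᴴ * W * (Wᴴ * W)) := by
    rw [h]; noncomm_ring
  have htr := congrArg trace h'
  simp only [mul_add, trace_add, trace_smul, RCLike.real_smul_eq_coe_mul] at htr
  rw [← htr, two_mul, trace_mul_comm Wᴴ (Wᴴ * W * W)]
  simp only [Matrix.mul_assoc]

theorem two_mul_trace_eq_of_relation_right
    (h : W * W * Wᴴ = a • W - Wᴴ * W * W + τ • (W * Wᴴ * W)) :
    2 * trace (Wᴴ * W * (W * Wᴴ)) = a * trace (Wᴴ * W) + τ * trace (W * Wᴴ * (W * Wᴴ)) := by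
  have h' : (W * W * Wᴴ + Wᴴ * W * W) * Wᴴ = a • (W * Wᴴ) + τ • (W * Wᴴ * (W * Wᴴ)) := by
    rw [h]; noncomm_ring
  have htr := congrArg trace h'
  simp only [add_mul, trace_add, trace_smul, RCLike.real_smul_eq_coe_mul,
    trace_mul_comm W Wᴴ] at htr
  rw [← htr, two_mul, trace_mul_comm (W * W * Wᴴ) Wᴴ]
  simp only [Matrix.mul_assoc]

theorem commute_conjTranspose_of_relation (ha : 0 ≤ a) (hτ : 2 ≤ τ)
    (h : W * W * Wᴴ = a • W - Wᴴ * W * W + τ • (W * Wᴴ * W)) : Commute W Wᴴ := by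
  set X := Wᴴ * W
  set Y := W * Wᴴ
  have hX : Xᴴ = X := (isHermitian_conjTranspose_mul_self W).eq
  have hY : Yᴴ = Y := (isHermitian_mul_conjTranspose_self W).eq
  have hleft := two_mul_trace_eq_of_relation_left h
  have hright := two_mul_trace_eq_of_relation_right h
  have hτ0 : (τ : 𝕜) ≠ 0 := RCLike.ofReal_ne_zero.mpr (by linarith)
  have hsq : trace (Y * Y) = trace (X * X) :=
    mul_left_cancel₀ hτ0 (by linear_combination hleft - hright)
  have hdefect : trace ((Y - X)ᴴ * (Y - X)) = (2 - τ) * trace (X * X) - a * trace X := by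
    rw [conjTranspose_sub, hX, hY]
    simp only [sub_mul, mul_sub, trace_sub, hsq, trace_mul_comm Y X]
    linear_combination -hleft
  have hnonpos : trace ((Y - X)ᴴ * (Y - X)) ≤ 0 := by
    have hXX : 0 ≤ trace (X * X) := by
      simpa only [hX] using (posSemidef_conjTranspose_mul_self X).trace_nonneg
    rw [hdefect, sub_nonpos]
    refine (mul_nonpos_of_nonpos_of_nonneg ?_ hXX).trans
      (mul_nonneg ?_ (posSemidef_conjTranspose_mul_self W).trace_nonneg)
    · exact_mod_cast sub_nonpos.mpr hτ
    · exact_mod_cast ha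
  have hzero := le_antisymm hnonpos (posSemidef_conjTranspose_mul_self _).trace_nonneg
  exact sub_eq_zero.mp (trace_conjTranspose_mul_self_eq_zero_iff.mp hzero)

end Matrix

theorem stmt_11_general (n : ℕ) (hn : 1 ≤ n) (a τ : ℝ) (ha : 0 ≤ a) (hτ : 2 ≤ τ)
    (W : Matrix (Fin n) (Fin n) ℂ)
    (h1 : W * W * Wᴴ = a • W - Wᴴ * W * W + τ • (W * Wᴴ * W))
    (hirr : ∀ U : Submodule ℂ (Fin n → ℂ),
      (∀ x ∈ U, W.mulVec x ∈ U) → (∀ x ∈ U, Wᴴ.mulVec x ∈ U) →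
      U = ⊥ ∨ U = ⊤) :
    n = 1 := by
  have : Nonempty (Fin n) := ⟨⟨0, hn⟩⟩
  have hnormal := Matrix.commute_conjTranspose_of_relation ha hτ h1
  simpa using Module.End.finrank_eq_one_of_commute_of_irreducible
    (hnormal.map Matrix.toLinAlgEquiv') hirr

/-- an irreducible finite-dimensional ∗-representation of `C_{L,a}`
with `det A = 1`, `a ≥ 0` and `tr A = τ ≥ 2` is one-dimensional. -/
theorem stmt_11 (n : ℕ) (hn : 1 ≤ n) (a τ : ℝ) (ha : 0 ≤ a) (hτ : 2 ≤ τ)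
    (W : Matrix (Fin n) (Fin n) ℂ)
    (h1 : W * W * Wᴴ = a • W - Wᴴ * W * W + τ • (W * Wᴴ * W))
    (h2 : W * Wᴴ * Wᴴ = a • Wᴴ - Wᴴ * Wᴴ * W + τ • (Wᴴ * W * Wᴴ))
    (hirr : ∀ U : Submodule ℂ (Fin n → ℂ),
      (∀ x ∈ U, W.mulVec x ∈ U) → (∀ x ∈ U, Wᴴ.mulVec x ∈ U) →
      U = ⊥ ∨ U = ⊤) :
    n = 1 :=
  stmt_11_general n hn a τ ha hτ W h1 hirr
end

section
/- Let θ > 0 and a ∈ ℝ, set τ = 2·cosh(2θ), Δ = 2 − τ, μ = a/Δ, and let ĉ > 0. Define x₁, x₂ : ℝ → ℝ² by x₁(β) = √ĉ·( μ/√ĉ + cosh β / cosh θ, μ/√ĉ + cosh(β − 2θ)/cosh θ ) and x₂(β) = √ĉ·( μ/√ĉ − cosh β / cosh θ, μ/√ĉ − cosh(β − 2θ)/cosh θ ). Let ĉ₁ = Δ·(ĉ − μ²) and define p : ℝ² → ℝ by p(r,s) = −4a(r+s) + (2−τ)(r+s)² + (2+τ)(r−s)² − 4ĉ₁. Then the constraint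 curve Γ = { (r,s) ∈ ℝ² : p(r,s) = 0 } equals the union of the ranges of x₁ and x₂: Γ = { x₁(β) : β ∈ ℝ } ∪ { x₂(β) : β ∈ ℝ }. -/
/-!
Write `Δ = 2 - τ = -4 sinh² θ` and `2 + τ = 4 cosh² θ`. Since `a = μ Δ` and `ĉ₁ = Δ (ĉ - μ²)`,
`p(r, s) = 4 cosh² θ ((r - s)² - tanh² θ ((r + s - 2μ)² - 4ĉ))`, so in the coordinates
`X = (r + s - 2μ) / (2√ĉ)`, `Y = (r - s) / (2√ĉ tanh θ)` the curve `Γ` is the hyperbola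
`X² - Y² = 1`, whose two branches are `±(cosh t, sinh t)`. Going back,
`r = μ ± √ĉ (cosh t + tanh θ sinh t) = μ ± √ĉ cosh (t + θ) / cosh θ` and similarly
`s = μ ± √ĉ cosh (t - θ) / cosh θ`, which are `x₁ (t + θ)` and `x₂ (t + θ)`.
-/

open Real

theorem sq_sub_sq_eq_one_iff_exists_cosh_sinh {x y : ℝ} :
    x ^ 2 - y ^ 2 = 1 ↔ ∃ t, (x = cosh t ∧ y = sinh t) ∨ (x = -cosh t ∧ y = -sinh t) := by
  constructor
  · intro h
    have habs : |x| = cosh (arsinh y) := by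
      rw [cosh_arsinh, ← sqrt_sq_eq_abs]
      congr 1
      linarith
    rcases abs_choice x with hx | hx
    · exact ⟨arsinh y, .inl ⟨by linarith, (sinh_arsinh y).symm⟩⟩
    · refine ⟨arsinh (-y), .inr ⟨?_, ?_⟩⟩
      · rw [arsinh_neg, cosh_neg]
        linarith
      · rw [sinh_arsinh, neg_neg]
  · rintro ⟨t, ⟨rfl, rfl⟩ | ⟨rfl, rfl⟩⟩ <;> linear_combination cosh_sq t

theorem scaled_sum_diff_eq_iff {ρ k : ℝ} (hρ : ρ ≠ 0) (hk : k ≠ 0) (μ r s X Y : ℝ) :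
    ((r + s - 2 * μ) / (2 * ρ) = X ∧ (r - s) / (2 * ρ * k) = Y) ↔
      (r = μ + ρ * (X + k * Y) ∧ s = μ + ρ * (X - k * Y)) := by
  constructor
  · rintro ⟨rfl, rfl⟩
    constructor <;> field_simp <;> ring
  · rintro ⟨rfl, rfl⟩
    constructor <;> field_simp <;> ring

theorem cosh_add_div_cosh (t θ : ℝ) : cosh (t + θ) / cosh θ = cosh t + tanh θ * sinh t := by
  rw [cosh_add, tanh_eq_sinh_div_cosh]
  field_simp

theorem cosh_sub_div_cosh (t θ : ℝ) : cosh (t - θ) / cosh θ = cosh t - tanh θ * sinh t := by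
  rw [cosh_sub, tanh_eq_sinh_div_cosh]
  field_simp

theorem sq_mul_sub_eq_sq_iff_exists_cosh_sinh {ρ k : ℝ} (hρ : ρ ≠ 0) (hk : k ≠ 0) (μ r s : ℝ) :
    k ^ 2 * ((r + s - 2 * μ) ^ 2 - 4 * ρ ^ 2) = (r - s) ^ 2 ↔
      ∃ t, (r = μ + ρ * (cosh t + k * sinh t) ∧ s = μ + ρ * (cosh t - k * sinh t)) ∨
        (r = μ - ρ * (cosh t + k * sinh t) ∧ s = μ - ρ * (cosh t - k * sinh t)) := by
  have hnorm : k ^ 2 * ((r + s - 2 * μ) ^ 2 - 4 * ρ ^ 2) = (r - s) ^ 2 ↔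
      ((r + s - 2 * μ) / (2 * ρ)) ^ 2 - ((r - s) / (2 * ρ * k)) ^ 2 = 1 := by
    field_simp
    constructor <;> intro h <;> linear_combination h
  rw [hnorm, sq_sub_sq_eq_one_iff_exists_cosh_sinh]
  refine exists_congr fun t => or_congr ?_ ?_ <;> rw [scaled_sum_diff_eq_iff hρ hk]
  rw [show μ + ρ * (-cosh t + k * -sinh t) = μ - ρ * (cosh t + k * sinh t) by ring,
    show μ + ρ * (-cosh t - k * -sinh t) = μ - ρ * (cosh t - k * sinh t) by ring]

theorem constraint_eq_four_cosh_sq_mul (θ μ c r s : ℝ) :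
    -4 * (μ * (2 - 2 * cosh (2 * θ))) * (r + s) + (2 - 2 * cosh (2 * θ)) * (r + s) ^ 2
      + (2 + 2 * cosh (2 * θ)) * (r - s) ^ 2 - 4 * ((2 - 2 * cosh (2 * θ)) * (c - μ ^ 2))
      = 4 * cosh θ ^ 2 * ((r - s) ^ 2 - tanh θ ^ 2 * ((r + s - 2 * μ) ^ 2 - 4 * c)) := by
  have hsinh : cosh θ ^ 2 * tanh θ ^ 2 = sinh θ ^ 2 := by
    rw [tanh_eq_sinh_div_cosh, div_pow, mul_div_cancel₀ _ (pow_ne_zero 2 (cosh_pos θ).ne')]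
  rw [cosh_two_mul]
  linear_combination (4 * ((r + s - 2 * μ) ^ 2 - 4 * c)) * hsinh
    + (-2 * ((r + s - 2 * μ) ^ 2 - 4 * c) - 2 * (r - s) ^ 2) * cosh_sq θ

/-- for `det A = 1` and `tr A = τ = 2 cosh 2θ > 2`, the constraint curve
`Γ = p⁻¹(0)` equals the union of the two hyperbolically parametrized branches `x₁, x₂`. -/
theorem stmt_13 (θ a : ℝ) (hθ : 0 < θ)
    (τ Δ μ c : ℝ) (hτ : τ = 2 * Real.cosh (2 * θ)) (hΔ : Δ = 2 - τ) (hμ : μ = a / Δ)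
    (hc : 0 < c)
    (x₁ x₂ : ℝ → ℝ × ℝ)
    (hx₁ : x₁ = fun β => (Real.sqrt c * (μ / Real.sqrt c + Real.cosh β / Real.cosh θ),
      Real.sqrt c * (μ / Real.sqrt c + Real.cosh (β - 2 * θ) / Real.cosh θ)))
    (hx₂ : x₂ = fun β => (Real.sqrt c * (μ / Real.sqrt c - Real.cosh β / Real.cosh θ),
      Real.sqrt c * (μ / Real.sqrt c - Real.cosh (β - 2 * θ) / Real.cosh θ)))
    (c₁ : ℝ) (hc₁ : c₁ = Δ * (c - μ ^ 2))
    (p : ℝ × ℝ → ℝ)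
    (hp : p = fun z => -4 * a * (z.1 + z.2) + (2 - τ) * (z.1 + z.2) ^ 2
      + (2 + τ) * (z.1 - z.2) ^ 2 - 4 * c₁) :
    {z : ℝ × ℝ | p z = 0} = {z | ∃ β : ℝ, z = x₁ β} ∪ {z | ∃ β : ℝ, z = x₂ β} := by
  have hΔ0 : Δ ≠ 0 := by
    have := one_lt_cosh.mpr (by positivity : 2 * θ ≠ 0)
    rw [hΔ, hτ]
    linarith
  have ha : a = μ * Δ := by rw [hμ, div_mul_cancel₀ a hΔ0]
  subst hp hc₁ ha hΔ hτ hx₁ hx₂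
  have hsc : √c ≠ 0 := (sqrt_pos.mpr hc).ne'
  have htanh : tanh θ ≠ 0 := by
    rw [tanh_eq_sinh_div_cosh]
    exact div_ne_zero (sinh_ne_zero.mpr hθ.ne') (cosh_pos θ).ne'
  ext ⟨r, s⟩
  simp only [Set.mem_ofPred_eq, Set.mem_union, Prod.mk.injEq, constraint_eq_four_cosh_sq_mul]
  rw [mul_eq_zero, or_iff_right (by positivity), sub_eq_zero, eq_comm,
    show 4 * c = 4 * √c ^ 2 by rw [sq_sqrt hc.le],
    sq_mul_sub_eq_sq_iff_exists_cosh_sinh hsc htanh, ← exists_or]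
  refine (Equiv.addRight θ).exists_congr fun t => ?_
  simp only [Equiv.coe_addRight, mul_add √c (μ / √c), mul_sub √c (μ / √c),
    mul_div_cancel₀ μ hsc, cosh_add_div_cosh,
    show t + θ - 2 * θ = t - θ by ring, cosh_sub_div_cosh]
end

section
/- Let θ > 0 and a ∈ ℝ, set τ = 2·cosh(2θ), Δ = 2 − τ, μ = a/Δ, and let ĉ > 0. Define L̂ : ℝ² → ℝ² by L̂(x,y) = (τx − y + a, x), and define x₁, x₂ : ℝ → ℝ² by x₁(β) = √ĉ·( μ/√ĉ + cosh β / cosh θ, μ/√ĉ + cosh(β − 2θ)/cosh θ ) and x₂(β) = √ĉ·( μ/√ĉ − cosh β / cosh θ, μ/√ĉ − cosh(β − 2θ)/cosh θ ). Then for every β ∈ ℝ, L̂(x₁(β)) = x₁(β + 2θ) and L̂(x₂(β)) = x₂(β + 2θ). -/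
open Real

/-! Write `k = ±√ĉ / cosh θ`, so that the branch is `β ↦ (μ + k cosh β, μ + k cosh (β − 2θ))`.
The product formula `cosh (β + 2θ) + cosh (β − 2θ) = τ cosh β` says that `β ↦ k cosh β` solves the
homogeneous recurrence `z₊ = τ z − z₋`, and `a = μ Δ` makes `(μ, μ)` the fixed point of `L̂`. -/

theorem Real.cosh_add_add_cosh_sub (x y : ℝ) :
    cosh (x + y) + cosh (x - y) = 2 * cosh x * cosh y := by
  rw [cosh_add, cosh_sub]; ring

theorem Real.two_sub_two_mul_cosh_ne_zero {x : ℝ} (hx : x ≠ 0) : 2 - 2 * cosh x ≠ 0 := by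
  have := one_lt_cosh.mpr hx
  linarith

theorem affine_map_cosh_branch_shift (θ μ k β : ℝ) :
    (2 * cosh (2 * θ) * (μ + k * cosh β) - (μ + k * cosh (β - 2 * θ))
        + μ * (2 - 2 * cosh (2 * θ)), μ + k * cosh β)
      = (μ + k * cosh (β + 2 * θ), μ + k * cosh (β + 2 * θ - 2 * θ)) := by
  have hrec := cosh_add_add_cosh_sub β (2 * θ)
  rw [add_sub_cancel_right]
  ext
  · linear_combination -k * hrec
  · rfl

/-- for `det A = 1` and `tr A = τ = 2 cosh 2θ > 2`, the affine map
`L̂(x,y) = (τx − y + a, x)` acts on each branch of the constraint curve by translating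
the hyperbolic parameter by `2θ`. -/
theorem stmt_14 (θ a : ℝ) (hθ : 0 < θ)
    (τ Δ μ c : ℝ) (hτ : τ = 2 * Real.cosh (2 * θ)) (hΔ : Δ = 2 - τ) (hμ : μ = a / Δ)
    (hc : 0 < c)
    (L : ℝ × ℝ → ℝ × ℝ) (hL : L = fun z => (τ * z.1 - z.2 + a, z.1))
    (x₁ x₂ : ℝ → ℝ × ℝ)
    (hx₁ : x₁ = fun β => (Real.sqrt c * (μ / Real.sqrt c + Real.cosh β / Real.cosh θ),
      Real.sqrt c * (μ / Real.sqrt c + Real.cosh (β - 2 * θ) / Real.cosh θ)))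
    (hx₂ : x₂ = fun β => (Real.sqrt c * (μ / Real.sqrt c - Real.cosh β / Real.cosh θ),
      Real.sqrt c * (μ / Real.sqrt c - Real.cosh (β - 2 * θ) / Real.cosh θ))) :
    ∀ β : ℝ, L (x₁ β) = x₁ (β + 2 * θ) ∧ L (x₂ β) = x₂ (β + 2 * θ) := by
  have hs : sqrt c ≠ 0 := (sqrt_pos.mpr hc).ne'
  have hch : cosh θ ≠ 0 := (cosh_pos θ).ne'
  have ha : a = μ * (2 - 2 * cosh (2 * θ)) := by
    rw [hμ, hΔ, hτ, div_mul_cancel₀ _ (two_sub_two_mul_cosh_ne_zero (by positivity))]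
  have hx₁' : x₁ = fun β =>
      (μ + sqrt c / cosh θ * cosh β, μ + sqrt c / cosh θ * cosh (β - 2 * θ)) := by
    rw [hx₁]; ext β <;> field_simp
  have hx₂' : x₂ = fun β =>
      (μ + -sqrt c / cosh θ * cosh β, μ + -sqrt c / cosh θ * cosh (β - 2 * θ)) := by
    rw [hx₂]; ext β <;> field_simp <;> ring
  intro β
  subst hL hx₁' hx₂' hτ ha
  exact ⟨affine_map_cosh_branch_shift θ μ _ β, affine_map_cosh_branch_shift θ μ _ β⟩
end

section
/- Let θ > 0 and a ∈ ℝ, set τ = 2·cosh(2θ), Δ = 2 − τ and μ = a/Δ, and define L̂ : ℝ² → ℝ² by L̂(x,y) = (τx − y + a, x). Then for every natural number n ≥ 1 and every x ∈ ℝ, L̂^[n−1](x, 0) = (0, x) if and only if x = 2μ·sinh θ·sinh((n−1)θ) / cosh(nθ). -/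
/-!
Since `a = μ Δ`, the point `(μ, μ)` is fixed by `L̂`, and `L̂` is the companion map of the
recurrence `x (k+1) = τ x k - x (k-1) + a`. As `cosh (t + 2θ) + cosh (t - 2θ) = τ cosh t`,
the sequence `x k = μ - μ cosh ((2k - n) θ) / cosh (n θ)` solves it; it is symmetric about
`k = n / 2` and vanishes at `k = 0` and `k = n`, so the orbit of `(x 1, 0)` reaches `(0, x 1)`
after `n - 1` steps, and `x 1` is the stated value.

Conversely, the orbits of `(x, 0)` and `(y, 0)` differ by `(x - y)` times the orbit of `(1, 0)`
under the linear part. For `τ ≥ 2` the first coordinate of the latter is always `≥ 1`, so the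
first coordinate of `L̂^[n-1] (x, 0)` determines `x`.
-/

open Real

theorem Real.cosh_add_sub_cosh_sub (u v : ℝ) :
    cosh (u + v) - cosh (u - v) = 2 * sinh u * sinh v := by
  rw [cosh_add, cosh_sub]
  ring

def companionMap (τ a : ℝ) (z : ℝ × ℝ) : ℝ × ℝ := (τ * z.1 - z.2 + a, z.1)

namespace companionMap

variable (τ : ℝ)

theorem apply_sub_apply (a : ℝ) (p q : ℝ × ℝ) :
    companionMap τ a p - companionMap τ a q = companionMap τ 0 (p - q) := by
  ext <;> simp only [companionMap, Prod.fst_sub, Prod.snd_sub]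
  ring

theorem iterate_sub (a : ℝ) (p q : ℝ × ℝ) (m : ℕ) :
    (companionMap τ a)^[m] p - (companionMap τ a)^[m] q = (companionMap τ 0)^[m] (p - q) := by
  induction m with
  | zero => rfl
  | succ m ih =>
    simp only [Function.iterate_succ_apply']
    rw [apply_sub_apply, ih]

theorem zero_iterate_smul (c : ℝ) (z : ℝ × ℝ) (m : ℕ) :
    (companionMap τ 0)^[m] (c • z) = c • (companionMap τ 0)^[m] z := by
  have hcomm : Function.Commute (c • · : ℝ × ℝ → ℝ × ℝ) (companionMap τ 0) := fun z => by
    ext <;> simp only [companionMap, Prod.smul_fst, Prod.smul_snd, smul_eq_mul]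
    ring
  exact ((hcomm.iterate_right m).eq z).symm

-- The increments of `u (k+1) = τ u k - u (k-1)`, `u (-1) = 0`, `u 0 = 1` never decrease for `τ ≥ 2`.
theorem one_le_fst_zero_iterate (hτ : 2 ≤ τ) (m : ℕ) :
    1 ≤ ((companionMap τ 0)^[m] (1, 0)).1 := by
  suffices h : ∀ m : ℕ, 0 ≤ ((companionMap τ 0)^[m] (1, 0)).2 ∧
      ((companionMap τ 0)^[m] (1, 0)).2 + 1 ≤ ((companionMap τ 0)^[m] (1, 0)).1 by
    linarith [h m]
  intro m
  induction m with
  | zero => norm_num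
  | succ m ih =>
    obtain ⟨hv, hvu⟩ := ih
    rw [Function.iterate_succ_apply']
    simp only [companionMap]
    have hu : 0 ≤ ((companionMap τ 0)^[m] (1, 0)).1 := by linarith
    exact ⟨hu, by nlinarith [mul_nonneg (sub_nonneg.mpr hτ) hu]⟩

theorem fst_iterate_injective (hτ : 2 ≤ τ) (a : ℝ) (m : ℕ) {x y : ℝ}
    (h : ((companionMap τ a)^[m] (x, 0)).1 = ((companionMap τ a)^[m] (y, 0)).1) : x = y := by
  have hdiff := congrArg Prod.fst (iterate_sub τ a (x, 0) (y, 0) m)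
  rw [Prod.fst_sub, h, sub_self, Prod.mk_sub_mk, sub_self,
    show ((x - y, 0) : ℝ × ℝ) = (x - y) • (1, 0) by simp, zero_iterate_smul,
    Prod.smul_fst, smul_eq_mul, eq_comm, mul_eq_zero] at hdiff
  rcases hdiff with hxy | hu
  · linarith
  · linarith [one_le_fst_zero_iterate τ hτ m]

theorem apply_cosh (φ μ C t : ℝ) :
    companionMap (2 * cosh φ) (μ * (2 - 2 * cosh φ))
        (μ + C * cosh t, μ + C * cosh (t - φ)) =
      (μ + C * cosh (t + φ), μ + C * cosh t) := by
  simp only [companionMap, Prod.mk.injEq, and_true, cosh_add, cosh_sub]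
  ring

theorem iterate_cosh (φ μ C s : ℝ) (m : ℕ) :
    (companionMap (2 * cosh φ) (μ * (2 - 2 * cosh φ)))^[m]
        (μ + C * cosh (s + φ), μ + C * cosh s) =
      (μ + C * cosh (s + (m + 1) * φ), μ + C * cosh (s + m * φ)) := by
  induction m with
  | zero => simp
  | succ m ih =>
    rw [Function.iterate_succ_apply', ih]
    convert apply_cosh φ μ C (s + (m + 1) * φ) using 4 <;> push_cast <;> ring_nf

theorem iterate_symmetric_orbit (θ μ : ℝ) {n : ℕ} (hn : 1 ≤ n) {x₀ : ℝ}
    (hx₀ : x₀ = 2 * μ * sinh θ * sinh ((n - 1) * θ) / cosh (n * θ)) :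
    (companionMap (2 * cosh (2 * θ)) (μ * (2 - 2 * cosh (2 * θ))))^[n - 1] (x₀, 0) = (0, x₀) := by
  have hcosh : cosh (n * θ) ≠ 0 := (cosh_pos _).ne'
  set C := -μ / cosh (n * θ) with hC
  have hzero : μ + C * cosh (n * θ) = 0 := by
    rw [hC, div_mul_cancel₀ _ hcosh, add_neg_cancel]
  have hC₀ : μ + C * cosh ((n - 2) * θ) = x₀ := by
    have hdiff := cosh_add_sub_cosh_sub ((n - 1) * θ) θ
    rw [show ((n : ℝ) - 1) * θ + θ = n * θ by ring,
      show ((n : ℝ) - 1) * θ - θ = (n - 2) * θ by ring] at hdiff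
    rw [hC, hx₀]
    field_simp
    linear_combination (norm := ring_nf) μ * hdiff
  have hn' : ((n - 1 : ℕ) : ℝ) = n - 1 := by rw [Nat.cast_sub hn, Nat.cast_one]
  convert iterate_cosh (2 * θ) μ C (-(n * θ)) (n - 1) using 3
  · rw [← hC₀, ← cosh_neg]; ring_nf
  · rw [cosh_neg, hzero]
  · rw [hn', ← hzero]; ring_nf
  · rw [hn', ← hC₀]; ring_nf

end companionMap

open companionMap in
/-- for `det A = 1` and `tr A = τ = 2 cosh 2θ > 2`, the affine map
`L̂(x,y) = (τx − y + a, x)` satisfies `L̂^[n−1](x,0) = (0,x)` if and only if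
`x = 2μ sinh θ sinh((n−1)θ) / cosh(nθ)`. -/
theorem stmt_15 (θ a : ℝ) (hθ : 0 < θ)
    (τ Δ μ : ℝ) (hτ : τ = 2 * Real.cosh (2 * θ)) (hΔ : Δ = 2 - τ) (hμ : μ = a / Δ)
    (L : ℝ × ℝ → ℝ × ℝ) (hL : L = fun z => (τ * z.1 - z.2 + a, z.1)) :
    ∀ n : ℕ, 1 ≤ n → ∀ x : ℝ,
      L^[n - 1] (x, 0) = (0, x) ↔
      x = 2 * μ * Real.sinh θ * Real.sinh (((n : ℝ) - 1) * θ) / Real.cosh ((n : ℝ) * θ) := by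
  intro n hn x
  obtain rfl : L = companionMap τ a := hL
  have hτ2 : 2 < τ := by
    rw [hτ]
    linarith [one_lt_cosh.mpr (mul_pos two_pos hθ).ne']
  have ha : a = μ * (2 - τ) := by
    rw [hμ, ← hΔ, div_mul_cancel₀ a (by rw [hΔ]; linarith)]
  have horbit := iterate_symmetric_orbit θ μ hn rfl
  rw [← hτ, ← ha] at horbit
  exact ⟨fun h => fst_iterate_injective τ hτ2.le a (n - 1) (by rw [h, horbit]),
    fun h => h ▸ horbit⟩
end

section
/- Let n ≥ 1 be a natural number, let a, τ, q ∈ ℝ and β ∈ ℝ, and let d : ZMod n → ℝ satisfy d k > 0 for all k and the orbit condition d(k+1) = τ·d(k) − q·d(k−1) + a for all k ∈ ZMod n. Define the n×n complex matrix W by W k l = exp(iβ)·√(d k) if l = k + 1 and W k l = 0 otherwise (indices in ZMod n), and set V = Wᴴ (the conjugate transpose). Then W and V satisfy the defining relations of C_{L,a}: W·W·V = a•W − q•(V·W·W) + τ•(W·V·W) and W·V·V = a•V − q•(V·V·W) + τ•(V·W·V). -/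
/-!
`W` is the cyclic shift with weights `w k` satisfying `|w k|² = d k`, so the products `W Wᴴ`
and `Wᴴ W` are the diagonal matrices `diag (d k)` and `diag (d (k - 1))`. Hence all three cubic
words in the first relation are again weighted shifts, and comparing their weights at
`(k, k + 1)` is exactly the orbit condition `d (k + 1) = τ d k - q d (k - 1) + a` times `w k`.
The second relation is the conjugate transpose of the first, since the scalars are real.
-/

open scoped Matrix

namespace Matrix

variable {G R S : Type*} [AddGroupWithOne G] [DecidableEq G]

def weightedShift [Zero R] (w : G → R) : Matrix G G R :=
  of fun k l => if l = k + 1 then w k else 0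

theorem weightedShift_apply [Zero R] (w : G → R) (k l : G) :
    weightedShift w k l = if l = k + 1 then w k else 0 :=
  rfl

theorem conjTranspose_weightedShift_apply [NonUnitalNonAssocSemiring R] [StarRing R]
    (w : G → R) (k l : G) :
    (weightedShift w)ᴴ k l = if k = l + 1 then star (w l) else 0 := by
  simp only [conjTranspose_apply, weightedShift_apply]
  split_ifs <;> simp

variable [Fintype G]

section Semiring

variable [NonUnitalNonAssocSemiring R]

theorem diagonal_mul_weightedShift (D w : G → R) :
    diagonal D * weightedShift w = weightedShift fun k => D k * w k := by
  ext k l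
  simp only [diagonal_mul, weightedShift_apply, mul_ite, mul_zero]

theorem weightedShift_mul_diagonal (w D : G → R) :
    weightedShift w * diagonal D = weightedShift fun k => w k * D (k + 1) := by
  ext k l
  simp only [mul_diagonal, weightedShift_apply, ite_mul, zero_mul]
  split_ifs with h <;> simp [h]

variable [StarRing R]

theorem weightedShift_mul_conjTranspose (w : G → R) :
    weightedShift w * (weightedShift w)ᴴ = diagonal fun k => w k * star (w k) := by
  ext k l
  rw [mul_apply, Finset.sum_eq_single (k + 1)]
  · simp only [weightedShift_apply, conjTranspose_weightedShift_apply, if_true, diagonal_apply]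
    by_cases h : k = l <;> simp [h]
  · intro j _ hj
    simp [weightedShift_apply, hj]
  · simp

theorem conjTranspose_mul_weightedShift (w : G → R) :
    (weightedShift w)ᴴ * weightedShift w = diagonal fun k => star (w (k - 1)) * w (k - 1) := by
  ext k l
  rw [mul_apply, Finset.sum_eq_single (k - 1)]
  · simp only [weightedShift_apply, conjTranspose_weightedShift_apply, sub_add_cancel, if_true,
      diagonal_apply]
    rcases eq_or_ne k l with rfl | h
    · simp
    · simp [h, h.symm]
  · intro j _ hj
    rw [conjTranspose_weightedShift_apply, if_neg fun h => hj (eq_sub_of_add_eq h.symm), zero_mul]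
  · simp

end Semiring

/-- The defining relations of `C_{L,a}`, with `L` the matrix of trace `τ` and determinant `q`. -/
def CLRelations {ι : Type*} [Fintype ι] [SMul S R] [Ring R] (a τ q : S) (W V : Matrix ι ι R) :
    Prop :=
  W * W * V = a • W - q • (V * W * W) + τ • (W * V * W) ∧
    W * V * V = a • V - q • (V * V * W) + τ • (V * W * V)

theorem clRelations_conjTranspose_of_fst {ι : Type*} [Fintype ι] [Star S] [TrivialStar S]
    [Ring R] [StarRing R] [SMul S R] [StarModule S R] {a τ q : S} {W : Matrix ι ι R}
    (h : W * W * Wᴴ = a • W - q • (Wᴴ * W * W) + τ • (W * Wᴴ * W)) :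
    CLRelations a τ q W Wᴴ := by
  refine ⟨h, ?_⟩
  simpa only [conjTranspose_mul, conjTranspose_sub, conjTranspose_add, conjTranspose_smul,
    conjTranspose_conjTranspose, star_trivial, mul_assoc] using congrArg conjTranspose h

theorem weightedShift_mul_mul_conjTranspose [CommRing S] [CommRing R] [StarRing R]
    [Algebra S R] (a τ q : S) (w : G → R) (d : G → S)
    (hd : ∀ k, w k * star (w k) = algebraMap S R (d k))
    (horbit : ∀ k, d (k + 1) = τ * d k - q * d (k - 1) + a) :
    weightedShift w * weightedShift w * (weightedShift w)ᴴ =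
      a • weightedShift w - q • ((weightedShift w)ᴴ * weightedShift w * weightedShift w) +
        τ • (weightedShift w * (weightedShift w)ᴴ * weightedShift w) := by
  rw [mul_assoc, weightedShift_mul_conjTranspose, conjTranspose_mul_weightedShift,
    weightedShift_mul_diagonal, diagonal_mul_weightedShift, diagonal_mul_weightedShift]
  ext k l
  simp only [add_apply, sub_apply, smul_apply, weightedShift_apply]
  split_ifs
  · rw [mul_comm (star _), hd, hd, hd, horbit]
    simp only [Algebra.smul_def, map_add, map_sub, map_mul]
    ring
  · simp

end Matrix

theorem stmt_16_general (n : ℕ) [NeZero n] (a τ q β : ℝ)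
    (d : ZMod n → ℝ) (hd : ∀ k, 0 < d k)
    (horbit : ∀ k : ZMod n, d (k + 1) = τ * d k - q * d (k - 1) + a)
    (W : Matrix (ZMod n) (ZMod n) ℂ)
    (hW : ∀ k l : ZMod n,
      W k l = if l = k + 1 then Complex.exp (β * Complex.I) * (Real.sqrt (d k) : ℂ) else 0) :
    W * W * Wᴴ = a • W - q • (Wᴴ * W * W) + τ • (W * Wᴴ * W) ∧
    W * Wᴴ * Wᴴ = a • Wᴴ - q • (Wᴴ * Wᴴ * W) + τ • (Wᴴ * W * Wᴴ) := by
  set w : ZMod n → ℂ := fun k => Complex.exp (β * Complex.I) * (Real.sqrt (d k) : ℂ)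
  obtain rfl : W = Matrix.weightedShift w := Matrix.ext hW
  have hnorm : ∀ k, w k * star (w k) = algebraMap ℝ ℂ (d k) := by
    intro k
    rw [Complex.star_def, Complex.mul_conj, Complex.normSq_eq_norm_sq, norm_mul,
      Complex.norm_exp_ofReal_mul_I, one_mul, Complex.norm_real, Real.norm_eq_abs,
      sq_abs, Real.sq_sqrt (hd k).le, Complex.coe_algebraMap]
  exact Matrix.clRelations_conjTranspose_of_fst
    (Matrix.weightedShift_mul_mul_conjTranspose a τ q w d hnorm horbit)

/-- a periodic orbit of the affine map `L̂(x,y) = (τx − qy + a, x)` in the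
open positive quadrant induces an `n`-dimensional loop ∗-representation of `C_{L,a}`
given by a cyclic weighted shift matrix. -/
theorem stmt_16 (n : ℕ) [NeZero n] (hn : 1 ≤ n) (a τ q β : ℝ)
    (d : ZMod n → ℝ) (hd : ∀ k, 0 < d k)
    (horbit : ∀ k : ZMod n, d (k + 1) = τ * d k - q * d (k - 1) + a)
    (W : Matrix (ZMod n) (ZMod n) ℂ)
    (hW : ∀ k l : ZMod n,
      W k l = if l = k + 1 then Complex.exp (β * Complex.I) * (Real.sqrt (d k) : ℂ) else 0) :
    W * W * Wᴴ = a • W - q • (Wᴴ * W * W) + τ • (W * Wᴴ * W) ∧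
    W * Wᴴ * Wᴴ = a • Wᴴ - q • (Wᴴ * Wᴴ * W) + τ • (Wᴴ * W * Wᴴ) :=
  stmt_16_general n a τ q β d hd horbit W hW
end

section
/- Let a, τ, q ∈ ℝ and let d : ℕ → ℝ satisfy d k > 0 for all k, d 1 = τ·d 0 + a, and d(k+1) = τ·d(k) − q·d(k−1) + a for all k ≥ 1. Let W and V be the linear endomorphisms of the space of finitely supported functions ℕ → ℂ determined on the standard basis (e_k) by W e₀ = 0, W e_{k+1} = √(d k) • e_k, and V e_k = √(d k) • e_{k+1}. Then W and V satisfy the defining relations of C_{L,a}: W∘W∘V = a•W − q•(V∘W∘W) + τ•(W∘V∘W) and W∘V∘V = a•V − q•(V∘V∘W) + τ•(V∘W∘V). -/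
/-!
Both relations are checked on the basis `e k`. Every composite of three shifts sends `e k` to a
multiple of a single basis vector, and comparing coefficients reduces each relation to
`w k * (w (k+1)^2 - τ * w k^2 + q * w (k-1)^2 - a) = 0`, with the `q`-term absent for `k = 0`.
For `w k = √(d k)` the bracket vanishes by the orbit recursion.
-/

open Finsupp

section WeightedShift

variable {R : Type*} [CommRing R] {W V : (ℕ →₀ R) →ₗ[R] (ℕ →₀ R)} {w : ℕ → R} {a τ q : R}
  (hW0 : W (single 0 1) = 0) (hW : ∀ k, W (single (k + 1) 1) = w k • single k 1)
  (hV : ∀ k, V (single k 1) = w k • single (k + 1) 1)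
  (h1 : w 1 ^ 2 = τ * w 0 ^ 2 + a)
  (hstep : ∀ k, w (k + 2) ^ 2 = τ * w (k + 1) ^ 2 - q * w k ^ 2 + a)
include hW0 hW hV h1 hstep

theorem weightedShift_lowering_relation :
    W ∘ₗ W ∘ₗ V = a • W - q • (V ∘ₗ W ∘ₗ W) + τ • (W ∘ₗ V ∘ₗ W) := by
  refine Finsupp.basisSingleOne.ext fun k => ?_
  rcases k with _ | _ | k <;>
    simp only [coe_basisSingleOne, LinearMap.comp_apply, LinearMap.add_apply,
      LinearMap.sub_apply, LinearMap.smul_apply, hW0, hW, hV, map_smul, smul_smul, smul_zero,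
      map_zero, sub_zero, add_zero, zero_add]
  · match_scalars
    linear_combination w 0 * h1
  · match_scalars
    linear_combination w (k + 1) * hstep k

theorem weightedShift_raising_relation :
    W ∘ₗ V ∘ₗ V = a • V - q • (V ∘ₗ V ∘ₗ W) + τ • (V ∘ₗ W ∘ₗ V) := by
  refine Finsupp.basisSingleOne.ext fun k => ?_
  rcases k with _ | k <;>
    simp only [coe_basisSingleOne, LinearMap.comp_apply, LinearMap.add_apply,
      LinearMap.sub_apply, LinearMap.smul_apply, hW0, hW, hV, map_smul, smul_smul, smul_zero,
      map_zero, sub_zero]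
  · match_scalars
    linear_combination w 0 * h1
  · match_scalars
    linear_combination w (k + 1) * hstep k

end WeightedShift

/-- a forward orbit of `L̂(x,y) = (τx − qy + a, x)` starting on the positive
x-axis and staying in the open positive quadrant induces a one-sided infinite-dimensional
representation of `C_{L,a}` by weighted shift operators on finitely supported functions
`ℕ → ℂ` (here `ℕ →₀ ℂ`, with standard basis `e k = Finsupp.single k 1`). -/
theorem stmt_17 (a τ q : ℝ)
    (d : ℕ → ℝ) (hd : ∀ k, 0 < d k)
    (hd1 : d 1 = τ * d 0 + a)
    (horbit : ∀ k : ℕ, 1 ≤ k → d (k + 1) = τ * d k - q * d (k - 1) + a)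
    (W V : (ℕ →₀ ℂ) →ₗ[ℂ] (ℕ →₀ ℂ))
    (hW0 : W (Finsupp.single 0 1) = 0)
    (hW : ∀ k : ℕ, W (Finsupp.single (k + 1) 1) = (Real.sqrt (d k) : ℂ) • Finsupp.single k 1)
    (hV : ∀ k : ℕ, V (Finsupp.single k 1) = (Real.sqrt (d k) : ℂ) • Finsupp.single (k + 1) 1) :
    W ∘ₗ W ∘ₗ V = a • W - q • (V ∘ₗ W ∘ₗ W) + τ • (W ∘ₗ V ∘ₗ W) ∧
    W ∘ₗ V ∘ₗ V = a • V - q • (V ∘ₗ V ∘ₗ W) + τ • (V ∘ₗ W ∘ₗ V) := by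
  have hsq : ∀ k, (Real.sqrt (d k) : ℂ) ^ 2 = d k := fun k => by
    rw [← Complex.ofReal_pow, Real.sq_sqrt (hd k).le]
  have h1 : (Real.sqrt (d 1) : ℂ) ^ 2 = τ * (Real.sqrt (d 0) : ℂ) ^ 2 + a := by
    simp only [hsq]
    exact_mod_cast hd1
  have hstep : ∀ k, (Real.sqrt (d (k + 2)) : ℂ) ^ 2 =
      τ * (Real.sqrt (d (k + 1)) : ℂ) ^ 2 - q * (Real.sqrt (d k) : ℂ) ^ 2 + a :=
    fun k => by
      simp only [hsq]
      exact_mod_cast horbit (k + 1) (Nat.le_add_left 1 k)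
  have hsmul : ∀ (r : ℝ) (T : (ℕ →₀ ℂ) →ₗ[ℂ] (ℕ →₀ ℂ)), r • T = (r : ℂ) • T :=
    fun r T => (algebraMap_smul ℂ r T).symm
  simp only [hsmul]
  exact ⟨weightedShift_lowering_relation hW0 hW hV h1 hstep,
    weightedShift_raising_relation hW0 hW hV h1 hstep⟩
end
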